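/- Let C ⊆ 2^[n] be a degree two code with G(C) chordal. Then among the simplicial vertices of G(C), any vertex i that is minimal in P(C) restricted to simplicial vertices is in fact minimal in P(C), i.e., I(i) = ∅. -/

import Mathlib

open MvPolynomial

noncomputable section

abbrev PM (n : ℕ) := MvPolynomial (Fin n) (ZMod 2)

/-- A pseudo-monomial in `F₂[x₁,…,xₙ]`. -/
def IsPseudoMonomial {n : ℕ} (f : PM n) : Prop :=
  ∃ σ τ : Finset (Fin n), Disjoint σ τ ∧
    f = (∏ i ∈ σ, X i) * ∏ j ∈ τ, (1 - X j)

/-- The indicator pseudo-monomial `ρ_σ`. -/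
def rho {n : ℕ} (σ : Finset (Fin n)) : PM n :=
  (∏ i ∈ σ, X i) * ∏ j ∈ σᶜ, (1 - X j)

/-- The neural ideal of a code. -/
def neuralIdeal {n : ℕ} (C : Set (Finset (Fin n))) : Ideal (PM n) :=
  Ideal.span {f | ∃ σ ∉ C, f = rho σ}

/-- The canonical form: minimal (under divisibility) pseudo-monomials in the neural ideal. -/
def CF {n : ℕ} (C : Set (Finset (Fin n))) : Set (PM n) :=
  {f | IsPseudoMonomial f ∧ f ∈ neuralIdeal C ∧
    ∀ g, IsPseudoMonomial g → g ∈ neuralIdeal C → g ∣ f → g = f}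

/-- Evaluation of a polynomial at a codeword. -/
def evalAt {n : ℕ} (c : Finset (Fin n)) (f : PM n) : ZMod 2 :=
  MvPolynomial.eval (fun i => if i ∈ c then 1 else 0) f

/-- The standing conventions on codes. -/
def GoodCode {n : ℕ} (C : Set (Finset (Fin n))) : Prop :=
  ∅ ∈ C ∧ (∀ i : Fin n, ∃ c ∈ C, i ∈ c) ∧
    ∀ i j : Fin n, i ≠ j → ¬(∀ c ∈ C, i ∈ c ↔ j ∈ c)

/-- The interval `[σ,τ]`. -/
def Icc' {n : ℕ} (σ τ : Finset (Fin n)) : Set (Finset (Fin n)) :=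
  {γ | σ ⊆ γ ∧ γ ⊆ τ}

/-- The deletion of a neuron from a code (keeping the ambient index set). -/
def del {n : ℕ} (C : Set (Finset (Fin n))) (i : Fin n) : Set (Finset (Fin n)) :=
  (fun c => c.erase i) '' C

/-- The deletion of the last neuron, as a code on `Fin n`. -/
def delLast {n : ℕ} (C : Set (Finset (Fin (n + 1)))) : Set (Finset (Fin n)) :=
  {d | ∃ c ∈ C, d.map Fin.castSuccEmb = c.erase (Fin.last n)}

/-- Neuron `i` is a `k`-piercing of `C`. -/
def IsPiercing {n : ℕ} (C : Set (Finset (Fin n))) (i : Fin n) (k : ℕ) : Prop :=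
  ∃ σ τ : Finset (Fin n), σ ⊆ τ ∧ i ∉ τ ∧ (τ \ σ).card = k ∧
    Icc' σ τ ⊆ del C i ∧
    C = del C i ∪ Icc' (insert i σ) (insert i τ)

/-- `C` is `k`-inductively pierced. -/
inductive InductivelyPierced {n : ℕ} (k : ℕ) : Set (Finset (Fin n)) → Prop
  | empty : InductivelyPierced k {∅}
  | pierce (C : Set (Finset (Fin n))) (i : Fin n) (k' : ℕ) (hk : k' ≤ k)
      (hp : IsPiercing C i k') (hrec : InductivelyPierced k (del C i)) :
      InductivelyPierced k C

/-- All elements of the canonical form have degree exactly two. -/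
def DegreeTwo {n : ℕ} (C : Set (Finset (Fin n))) : Prop :=
  ∀ f ∈ CF C, f.totalDegree = 2

/-- The general relationship graph `G(C)` of a degree two code. -/
def GRel {n : ℕ} (C : Set (Finset (Fin n))) : SimpleGraph (Fin n) where
  Adj i j := i ≠ j ∧ ∀ f ∈ CF C, f.vars ≠ {i, j}
  symm := by
    refine ⟨?_⟩
    rintro i j ⟨hne, h⟩
    exact ⟨hne.symm, fun f hf => by rw [Finset.pair_comm]; exact h f hf⟩
  loopless := ⟨fun i h => h.1 rfl⟩

/-- The order relation of `P(C)`: `i < j` iff `xᵢ(1-xⱼ) ∈ CF(J_C)`. -/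
def PLt {n : ℕ} (C : Set (Finset (Fin n))) (i j : Fin n) : Prop :=
  X i * (1 - X j) ∈ CF C

/-- A simplicial vertex: its neighborhood is a clique. -/
def IsSimplicial {V : Type*} (G : SimpleGraph V) (v : V) : Prop :=
  G.IsClique (G.neighborSet v)

/-- A chordal graph: every cycle of length at least four has a chord. -/
def IsChordal {V : Type*} (G : SimpleGraph V) : Prop :=
  ∀ (u : V) (w : G.Walk u u), w.IsCycle → 4 ≤ w.length →
    ∃ a b, G.Adj a b ∧ a ∈ w.support ∧ b ∈ w.support ∧ s(a, b) ∉ w.edges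

/-- The code of a collection of sets. -/
def codeOf {X : Type*} {n : ℕ} (U : Fin n → Set X) : Set (Finset (Fin n)) :=
  {σ | ∃ p, ∀ i, p ∈ U i ↔ i ∈ σ}

/-- `S` is a `k`-dimensional sphere: a sphere of positive radius inside a
`(k+1)`-dimensional affine subspace, centered in that subspace. -/
def IsSubSphere {E : Type*} [NormedAddCommGroup E] [NormedSpace ℝ E] (k : ℕ)
    (S : Set E) : Prop :=
  ∃ (A : AffineSubspace ℝ E) (c : E) (ρ : ℝ), 0 < ρ ∧ c ∈ A ∧
    Module.finrank ℝ A.direction = k + 1 ∧ S = (A : Set E) ∩ Metric.sphere c ρ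

/-- The boundary spheres of the balls `B(xᵢ, rᵢ)` form a well-formed collection in `ℝ^d`. -/
def WellFormedBalls {d n : ℕ} (x : Fin n → EuclideanSpace ℝ (Fin d))
    (r : Fin n → ℝ) : Prop :=
  ∀ F : Finset (Fin n), F.Nonempty →
    (F.card ≤ d →
      (⋂ i ∈ F, Metric.sphere (x i) (r i)) = ∅ ∨
        IsSubSphere (d - F.card) (⋂ i ∈ F, Metric.sphere (x i) (r i))) ∧
    (F.card = d + 1 → (⋂ i ∈ F, Metric.sphere (x i) (r i)) = ∅)

/-- `C` has a well-formed realization by open balls in `ℝ^d`. -/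
def HasWFRealization {n : ℕ} (C : Set (Finset (Fin n))) (d : ℕ) : Prop :=
  ∃ (x : Fin n → EuclideanSpace ℝ (Fin d)) (r : Fin n → ℝ),
    (∀ i, 0 < r i) ∧ WellFormedBalls x r ∧
    codeOf (fun i => Metric.ball (x i) (r i)) = C


section AlgebraPart

variable {n : ℕ}

/-- Abbreviation for the pseudo-monomial with positive part `σ` and negative part `τ`. -/
def pmST (σ τ : Finset (Fin n)) : PM n :=
  (∏ i ∈ σ, X i) * ∏ j ∈ τ, (1 - X j)

lemma rho_eq_pmST (σ : Finset (Fin n)) : rho σ = pmST σ σᶜ := rfl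

lemma evalAt_eq (c : Finset (Fin n)) (f : PM n) :
    evalAt c f = MvPolynomial.eval (fun i => if i ∈ c then (1 : ZMod 2) else 0) f := rfl

lemma evalAt_pmST (c σ τ : Finset (Fin n)) :
    evalAt c (pmST σ τ) = if σ ⊆ c ∧ Disjoint τ c then 1 else 0 := by
  have h1 : evalAt c (pmST σ τ)
      = (∏ i ∈ σ, (if i ∈ c then (1 : ZMod 2) else 0)) *
        ∏ j ∈ τ, (1 - if j ∈ c then (1 : ZMod 2) else 0) := by
    rw [evalAt_eq, pmST, map_mul, map_prod, map_prod]
    congr 1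
    · exact Finset.prod_congr rfl fun i _ => by rw [eval_X]
    · exact Finset.prod_congr rfl fun j _ => by rw [map_sub, map_one, eval_X]
  rw [h1]
  by_cases hσ : σ ⊆ c
  · by_cases hτ : Disjoint τ c
    · rw [if_pos ⟨hσ, hτ⟩]
      have p1 : (∏ i ∈ σ, (if i ∈ c then (1:ZMod 2) else 0)) = 1 := by
        rw [Finset.prod_congr rfl (fun i hi => if_pos (hσ hi)), Finset.prod_const_one]
      have p2 : (∏ j ∈ τ, ((1:ZMod 2) - if j ∈ c then 1 else 0)) = 1 := by
        rw [Finset.prod_congr rfl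
          (fun j hj => by rw [if_neg (Finset.disjoint_left.mp hτ hj), sub_zero]),
          Finset.prod_const_one]
      rw [p1, p2, one_mul]
    · rw [if_neg (by tauto)]
      obtain ⟨j, hjτ, hjc⟩ := Finset.not_disjoint_iff.mp hτ
      rw [Finset.prod_eq_zero hjτ (by simp [hjc]), mul_zero]
  · rw [if_neg (by tauto)]
    obtain ⟨i, hiσ, hic⟩ := Finset.not_subset.mp hσ
    rw [Finset.prod_eq_zero hiσ (by simp [hic]), zero_mul]

lemma evalAt_pmST_one {c σ τ : Finset (Fin n)} (h1 : σ ⊆ c) (h2 : Disjoint τ c) :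
    evalAt c (pmST σ τ) = 1 := by rw [evalAt_pmST, if_pos ⟨h1, h2⟩]

lemma vanish_of_mem_neuralIdeal {C : Set (Finset (Fin n))} {f : PM n}
    (hf : f ∈ neuralIdeal C) {c : Finset (Fin n)} (hc : c ∈ C) : evalAt c f = 0 := by
  have : neuralIdeal C ≤ RingHom.ker (MvPolynomial.eval
      (fun i => if i ∈ c then (1 : ZMod 2) else 0)) := by
    rw [neuralIdeal, Ideal.span_le]
    rintro g ⟨σ, hσ, rfl⟩
    have : evalAt c (rho σ) = 0 := by
      rw [rho_eq_pmST, evalAt_pmST, if_neg]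
      rintro ⟨hsc, hdc⟩
      have hcs : c ⊆ σ := fun x hx => by
        by_contra hxσ
        exact Finset.disjoint_left.mp hdc (Finset.mem_compl.mpr hxσ) hx
      exact hσ (by rwa [← Finset.Subset.antisymm hsc hcs] at hc)
    exact this
  exact this hf

/-- Interpolation: a pseudo-monomial is the sum of the `rho v` over its one-set. -/
lemma pmST_eq_sum_rho : ∀ (m : ℕ) (σ τ : Finset (Fin n)), Disjoint σ τ →
    ((σ ∪ τ)ᶜ).card = m →
    pmST σ τ = ∑ v ∈ Finset.univ.filter (fun v => σ ⊆ v ∧ Disjoint v τ), rho v := by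
  intro m
  induction m with
  | zero =>
    intro σ τ hd hcard
    have huniv : σ ∪ τ = Finset.univ := by
      have := Finset.card_eq_zero.mp hcard
      rwa [Finset.compl_eq_empty_iff] at this
    have hτ : τ = σᶜ := by
      apply Finset.eq_of_subset_of_card_le
      · intro x hx
        exact Finset.mem_compl.mpr fun hxσ => Finset.disjoint_left.mp hd hxσ hx
      · have h1 : σ.card + τ.card = Fintype.card (Fin n) := by
          rw [← Finset.card_union_of_disjoint hd, huniv, Finset.card_univ]
        have h2 : σᶜ.card = Fintype.card (Fin n) - σ.card := by
          simp [Finset.card_compl]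
        omega
    have hfil : Finset.univ.filter (fun v => σ ⊆ v ∧ Disjoint v τ) = {σ} := by
      ext v
      simp only [Finset.mem_filter, Finset.mem_univ, true_and, Finset.mem_singleton]
      constructor
      · rintro ⟨h1, h2⟩
        apply Finset.Subset.antisymm _ h1
        intro x hx
        by_contra hxσ
        exact Finset.disjoint_left.mp h2 hx (by rw [hτ]; exact Finset.mem_compl.mpr hxσ)
      · rintro rfl
        exact ⟨Finset.Subset.refl _, by rw [hτ]; exact disjoint_compl_right⟩
    rw [hfil, Finset.sum_singleton, rho_eq_pmST, hτ]
  | succ m ih =>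
    intro σ τ hd hcard
    have hne : ((σ ∪ τ)ᶜ).Nonempty := by
      rw [← Finset.card_pos, hcard]; omega
    obtain ⟨i, hi⟩ := hne
    have hiσ : i ∉ σ := fun h => (Finset.mem_compl.mp hi) (Finset.mem_union_left _ h)
    have hiτ : i ∉ τ := fun h => (Finset.mem_compl.mp hi) (Finset.mem_union_right _ h)
    have hd1 : Disjoint (insert i σ) τ := by
      rw [Finset.insert_eq, Finset.disjoint_union_left]
      exact ⟨Finset.disjoint_singleton_left.mpr hiτ, hd⟩
    have hd2 : Disjoint σ (insert i τ) := by
      rw [Finset.insert_eq, Finset.disjoint_union_right]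
      exact ⟨Finset.disjoint_singleton_right.mpr hiσ, hd⟩
    have hc1 : (((insert i σ) ∪ τ)ᶜ).card = m := by
      have : (insert i σ) ∪ τ = insert i (σ ∪ τ) := by
        rw [Finset.insert_union]
      rw [this, Finset.compl_insert, Finset.card_erase_of_mem hi, hcard]
      omega
    have hc2 : ((σ ∪ (insert i τ))ᶜ).card = m := by
      have : σ ∪ (insert i τ) = insert i (σ ∪ τ) := by
        rw [Finset.union_insert]
      rw [this, Finset.compl_insert, Finset.card_erase_of_mem hi, hcard]
      omega
    have hsplit : pmST σ τ = pmST (insert i σ) τ + pmST σ (insert i τ) := by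
      rw [pmST, pmST, pmST, Finset.prod_insert hiσ, Finset.prod_insert hiτ]
      ring
    rw [hsplit, ih _ _ hd1 hc1, ih _ _ hd2 hc2]
    rw [← Finset.sum_filter_add_sum_filter_not
      (Finset.univ.filter (fun v => σ ⊆ v ∧ Disjoint v τ)) (fun v => i ∈ v)]
    congr 1
    · apply Finset.sum_congr _ (fun _ _ => rfl)
      ext v
      simp only [Finset.mem_filter, Finset.mem_univ, true_and, Finset.insert_subset_iff]
      tauto
    · apply Finset.sum_congr _ (fun _ _ => rfl)
      ext v
      simp only [Finset.mem_filter, Finset.mem_univ, true_and, Finset.disjoint_insert_right]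
      tauto

lemma pmST_mem_neuralIdeal {C : Set (Finset (Fin n))} {σ τ : Finset (Fin n)}
    (hd : Disjoint σ τ) (h : ∀ v : Finset (Fin n), σ ⊆ v → Disjoint v τ → v ∉ C) :
    pmST σ τ ∈ neuralIdeal C := by
  rw [pmST_eq_sum_rho _ σ τ hd rfl]
  apply Ideal.sum_mem
  intro v hv
  rw [Finset.mem_filter] at hv
  exact Ideal.subset_span ⟨v, h v hv.2.1 hv.2.2, rfl⟩

lemma pmST_not_mem_neuralIdeal {C : Set (Finset (Fin n))} {σ τ c : Finset (Fin n)}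
    (hc : c ∈ C) (h1 : σ ⊆ c) (h2 : Disjoint τ c) : pmST σ τ ∉ neuralIdeal C := by
  intro hmem
  have := vanish_of_mem_neuralIdeal hmem hc
  rw [evalAt_pmST_one h1 h2] at this
  exact one_ne_zero this

/-- The membership-in-canonical-form criterion. -/
lemma pmST_mem_CF {C : Set (Finset (Fin n))} {σ τ : Finset (Fin n)}
    (hd : Disjoint σ τ) (hJ : pmST σ τ ∈ neuralIdeal C)
    (hmin : ∀ σ' τ' : Finset (Fin n), σ' ⊆ σ → τ' ⊆ τ → ¬(σ' = σ ∧ τ' = τ) →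
      pmST σ' τ' ∉ neuralIdeal C) :
    pmST σ τ ∈ CF C := by
  refine ⟨⟨σ, τ, hd, rfl⟩, hJ, ?_⟩
  rintro g ⟨σ', τ', hd', rfl⟩ hgJ ⟨h, hfh⟩
  have key : ∀ c : Finset (Fin n), σ ⊆ c → Disjoint τ c → σ' ⊆ c ∧ Disjoint τ' c := by
    intro c h1 h2
    have e1 : evalAt c (pmST σ τ) = evalAt c (pmST σ' τ') * evalAt c h := by
      rw [hfh]; exact map_mul _ _ _
    rw [evalAt_pmST_one h1 h2] at e1
    by_contra hcon
    rw [evalAt_pmST, if_neg hcon, zero_mul] at e1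
    exact one_ne_zero e1
  have k1 := key σ (Finset.Subset.refl _) hd.symm
  have hστc : σ ⊆ τᶜ := fun x hx => Finset.mem_compl.mpr (fun hxτ => Finset.disjoint_left.mp hd hx hxτ)
  have k2 := key τᶜ hστc disjoint_compl_right
  have hσ' : σ' ⊆ σ := k1.1
  have hτ' : τ' ⊆ τ := by
    intro x hx
    by_contra hxτ
    exact Finset.disjoint_left.mp k2.2 hx (Finset.mem_compl.mpr hxτ)
  by_cases heq : σ' = σ ∧ τ' = τ
  · rw [heq.1, heq.2]; rfl
  · exact absurd hgJ (hmin σ' τ' hσ' hτ' heq)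

lemma eval_congr_on_vars {g₁ g₂ : Fin n → ZMod 2} {p : PM n}
    (h : ∀ i ∈ p.vars, g₁ i = g₂ i) :
    MvPolynomial.eval g₁ p = MvPolynomial.eval g₂ p := by
  rw [eval_eq, eval_eq]
  apply Finset.sum_congr rfl
  intro d hd
  congr 1
  apply Finset.prod_congr rfl
  intro i hi
  rw [h i ((mem_vars i).mpr ⟨d, hd, hi⟩)]

lemma vars_pmST {σ τ : Finset (Fin n)} (hd : Disjoint σ τ) :
    (pmST σ τ).vars = σ ∪ τ := by
  classical
  apply Finset.Subset.antisymm
  · refine (vars_mul _ _).trans (Finset.union_subset_union ?_ ?_)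
    · refine (vars_prod _).trans ?_
      intro x hx
      rw [Finset.mem_biUnion] at hx
      obtain ⟨i, hi, hxi⟩ := hx
      rw [vars_X] at hxi
      rwa [Finset.mem_singleton.mp hxi]
    · refine (vars_prod _).trans ?_
      intro x hx
      rw [Finset.mem_biUnion] at hx
      obtain ⟨j, hj, hxj⟩ := hx
      have : (1 - X j : PM n).vars ⊆ {j} := by
        have h2 : (1 - X j : PM n) = 1 + X j := by
          rw [sub_eq_add_neg, CharTwo.neg_eq]
        rw [h2]
        refine (vars_add_subset _ _).trans ?_
        rw [vars_one, vars_X]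
        simp
      rwa [Finset.mem_singleton.mp (this hxj)]
  · intro x hx
    by_contra hxv
    have hagree : ∀ i ∈ (pmST σ τ).vars,
        (fun i => if i ∈ σ then (1 : ZMod 2) else 0) i =
        (fun i => if i = x then (if x ∈ σ then 0 else 1)
          else if i ∈ σ then (1 : ZMod 2) else 0) i := by
      intro i hi
      have : i ≠ x := fun h => hxv (h ▸ hi)
      simp only [if_neg this]
    have e1 : MvPolynomial.eval (fun i => if i ∈ σ then (1 : ZMod 2) else 0) (pmST σ τ) = 1 :=
      evalAt_pmST_one (Finset.Subset.refl _) hd.symm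
    have e2 : MvPolynomial.eval (fun i => if i = x then (if x ∈ σ then 0 else 1)
        else if i ∈ σ then (1 : ZMod 2) else 0) (pmST σ τ) = 0 := by
      set g₂ := fun i => if i = x then (if x ∈ σ then (0:ZMod 2) else 1)
        else if i ∈ σ then (1 : ZMod 2) else 0 with hg₂
      rw [pmST, map_mul]
      rcases Finset.mem_union.mp hx with hxσ | hxτ
      · have : MvPolynomial.eval g₂ (∏ i ∈ σ, (X i : PM n)) = 0 := by
          rw [map_prod]
          apply Finset.prod_eq_zero hxσ
          rw [eval_X, hg₂]
          simp [hxσ]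
        rw [this, zero_mul]
      · have hxσ : x ∉ σ := Finset.disjoint_right.mp hd hxτ
        have : MvPolynomial.eval g₂ (∏ j ∈ τ, ((1 : PM n) - X j)) = 0 := by
          rw [map_prod]
          apply Finset.prod_eq_zero hxτ
          rw [map_sub, map_one, eval_X, hg₂]
          simp [hxσ]
        rw [this, mul_zero]
    rw [eval_congr_on_vars hagree, e2] at e1
    exact one_ne_zero e1.symm

end AlgebraPart
section PLtPart

variable {n : ℕ} {C : Set (Finset (Fin n))}

lemma GRel_adj {a b : Fin n} :
    (GRel C).Adj a b ↔ a ≠ b ∧ ∀ f ∈ CF C, f.vars ≠ {a, b} := Iff.rfl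

lemma pmST_pair_eq (j i : Fin n) : pmST {j} {i} = X j * (1 - X i) := by
  simp [pmST]

lemma PLt_ne {j i : Fin n} (h : PLt C j i) : j ≠ i := by
  rintro rfl
  obtain ⟨⟨σ, τ, hd, heq⟩, -, -⟩ := h
  have h2 : evalAt σ (X j * (1 - X j) : PM n) = 0 := by
    rw [evalAt_eq, map_mul, map_sub, map_one, eval_X]
    by_cases hj : j ∈ σ <;> simp [hj]
  have h1 : evalAt σ (X j * (1 - X j) : PM n) = 1 := by
    rw [show (X j * (1 - X j) : PM n) = pmST σ τ from heq]
    exact evalAt_pmST_one (Finset.Subset.refl _) hd.symm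
  rw [h1] at h2
  exact one_ne_zero h2

lemma PLt_vanish {j i : Fin n} (h : PLt C j i) {c : Finset (Fin n)}
    (hc : c ∈ C) (hj : j ∈ c) : i ∈ c := by
  have hv := vanish_of_mem_neuralIdeal h.2.1 hc
  rw [evalAt_eq, map_mul, map_sub, map_one, eval_X, eval_X] at hv
  by_contra hic
  simp [hj, hic] at hv

lemma PLt_not_adj {j i : Fin n} (h : PLt C j i) : ¬ (GRel C).Adj j i := by
  intro hadj
  refine hadj.2 _ h ?_
  rw [show (X j * (1 - X i) : PM n) = pmST {j} {i} from (pmST_pair_eq j i).symm,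
    vars_pmST (by simpa using (PLt_ne h))]
  ext x; simp

lemma exists_codeword_pair (hgood : GoodCode C) {j k : Fin n}
    (hadj : (GRel C).Adj j k) : ∃ c ∈ C, j ∈ c ∧ k ∈ c := by
  by_contra hcon
  have hne : j ≠ k := hadj.1
  have hd : Disjoint ({j, k} : Finset (Fin n)) (∅ : Finset (Fin n)) :=
    Finset.disjoint_empty_right _
  have hJ : pmST {j, k} ∅ ∈ neuralIdeal C := by
    refine pmST_mem_neuralIdeal hd fun v hv _ hvC => ?_
    exact hcon ⟨v, hvC, hv (by simp), hv (by simp)⟩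
  have hCF : pmST {j, k} ∅ ∈ CF C := by
    refine pmST_mem_CF hd hJ ?_
    intro σ' τ' hσ' hτ' hne' hmem
    have hτ'e : τ' = ∅ := Finset.subset_empty.mp hτ'
    subst hτ'e
    by_cases hjσ : j ∈ σ'
    · by_cases hkσ : k ∈ σ'
      · refine hne' ⟨Finset.Subset.antisymm hσ' ?_, rfl⟩
        intro x hx
        rcases Finset.mem_insert.mp hx with rfl | hx
        · exact hjσ
        · rwa [Finset.mem_singleton.mp hx]
      · obtain ⟨cj, hcj, hjcj⟩ := hgood.2.1 j
        refine pmST_not_mem_neuralIdeal hcj ?_ (Finset.disjoint_empty_left _) hmem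
        intro x hx
        rcases Finset.mem_insert.mp (hσ' hx) with rfl | hx2
        · exact hjcj
        · exact absurd ((Finset.mem_singleton.mp hx2) ▸ hx) hkσ
    · obtain ⟨ck, hck, hkck⟩ := hgood.2.1 k
      refine pmST_not_mem_neuralIdeal hck ?_ (Finset.disjoint_empty_left _) hmem
      intro x hx
      rcases Finset.mem_insert.mp (hσ' hx) with rfl | hx2
      · exact absurd hx hjσ
      · rwa [Finset.mem_singleton.mp hx2]
  refine hadj.2 _ hCF ?_
  rw [vars_pmST hd]
  simp

/-- The key order-forcing fact: if `j < i` in `P(C)` and `k` is a neighbor of `j`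
in `G(C)`, then `k` is a neighbor of `i` or `k < i`. -/
lemma fact3 (hgood : GoodCode C) {i j k : Fin n} (hji : PLt C j i)
    (hjk : (GRel C).Adj j k) : (GRel C).Adj i k ∨ PLt C k i := by
  by_contra hcon
  push_neg at hcon
  obtain ⟨hik, hki⟩ := hcon
  have hkne : k ≠ i := by
    rintro rfl
    exact PLt_not_adj hji hjk
  have hex : ∃ f ∈ CF C, f.vars = {i, k} := by
    by_contra hex
    push_neg at hex
    exact hik ⟨Ne.symm hkne, hex⟩
  obtain ⟨f, hfCF, hfvars⟩ := hex
  obtain ⟨⟨σ, τ, hd, heq⟩, hJ, hminf⟩ := hfCF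
  have hu : σ ∪ τ = {i, k} := by
    rw [← hfvars, heq]
    exact (vars_pmST hd).symm
  have hiu : i ∈ σ ∪ τ := by rw [hu]; simp
  have hku : k ∈ σ ∪ τ := by rw [hu]; simp
  have hsub_σ : σ ⊆ {i, k} := hu ▸ Finset.subset_union_left
  have hsub_τ : τ ⊆ {i, k} := hu ▸ Finset.subset_union_right
  rcases Finset.mem_union.mp hiu with hiσ | hiτ <;>
    rcases Finset.mem_union.mp hku with hkσ | hkτ
  · -- f = X i * X k
    have hσe : σ = {i, k} := by
      refine Finset.Subset.antisymm hsub_σ ?_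
      intro x hx
      rcases Finset.mem_insert.mp hx with rfl | hx
      · exact hiσ
      · rwa [Finset.mem_singleton.mp hx]
    have hτe : τ = ∅ := by
      rw [Finset.eq_empty_iff_forall_notMem]
      intro x hx
      rcases Finset.mem_insert.mp (hsub_τ hx) with rfl | hx2
      · exact Finset.disjoint_right.mp hd hx hiσ
      · exact Finset.disjoint_right.mp hd hx ((Finset.mem_singleton.mp hx2) ▸ hkσ)
    obtain ⟨c, hcC, hjc, hkc⟩ := exists_codeword_pair hgood hjk
    have hic : i ∈ c := PLt_vanish hji hcC hjc
    rw [heq, hσe, hτe] at hJ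
    refine pmST_not_mem_neuralIdeal hcC ?_ (Finset.disjoint_empty_left _) hJ
    intro x hx
    rcases Finset.mem_insert.mp hx with rfl | hx2
    · exact hic
    · rwa [Finset.mem_singleton.mp hx2]
  · -- f = X i * (1 - X k)
    have hσe : σ = {i} := by
      refine Finset.Subset.antisymm ?_ (Finset.singleton_subset_iff.mpr hiσ)
      intro x hx
      rcases Finset.mem_insert.mp (hsub_σ hx) with rfl | hx2
      · exact Finset.mem_singleton_self _
      · exact absurd ((Finset.mem_singleton.mp hx2) ▸ hx)
          (fun h => Finset.disjoint_left.mp hd h hkτ)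
    have hτe : τ = {k} := by
      refine Finset.Subset.antisymm ?_ (Finset.singleton_subset_iff.mpr hkτ)
      intro x hx
      rcases Finset.mem_insert.mp (hsub_τ hx) with rfl | hx2
      · exact absurd hx (fun h => Finset.disjoint_left.mp hd hiσ h)
      · exact hx2
    rw [heq, hσe, hτe] at hJ
    -- so for all codewords, i ∈ c → k ∈ c
    have himp : ∀ c ∈ C, i ∈ c → k ∈ c := by
      intro c hc hic
      by_contra hkc
      exact pmST_not_mem_neuralIdeal hc (by simp [hic]) (by simp [hkc]) hJ
    -- then X j * (1 - X k) is in CF C, contradicting adjacency of j and k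
    have hnejk : j ≠ k := hjk.1
    have hd2 : Disjoint ({j} : Finset (Fin n)) ({k} : Finset (Fin n)) := by
      rw [Finset.disjoint_singleton_left]; simpa using hnejk
    have hJ2 : pmST {j} {k} ∈ neuralIdeal C := by
      refine pmST_mem_neuralIdeal hd2 fun v hv hdisj hvC => ?_
      have hjv : j ∈ v := hv (Finset.mem_singleton_self _)
      have hkv : k ∈ v := himp v hvC (PLt_vanish hji hvC hjv)
      exact (Finset.disjoint_right.mp hdisj (Finset.mem_singleton_self _)) hkv
    have hCF2 : pmST {j} {k} ∈ CF C := by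
      refine pmST_mem_CF hd2 hJ2 ?_
      intro σ' τ' hσ' hτ' hne' hmem
      rcases Finset.subset_singleton_iff.mp hσ' with rfl | rfl <;>
        rcases Finset.subset_singleton_iff.mp hτ' with rfl | rfl
      · exact pmST_not_mem_neuralIdeal hgood.1 (Finset.empty_subset _)
          (Finset.disjoint_empty_left _) hmem
      · exact pmST_not_mem_neuralIdeal hgood.1 (Finset.empty_subset _) (by simp) hmem
      · obtain ⟨cj, hcj, hjcj⟩ := hgood.2.1 j
        exact pmST_not_mem_neuralIdeal hcj (by simp [hjcj])
          (Finset.disjoint_empty_left _) hmem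
      · exact hne' ⟨rfl, rfl⟩
    refine hjk.2 _ hCF2 ?_
    rw [vars_pmST hd2]
    ext x; simp
  · -- f = X k * (1 - X i) : PLt C k i
    have hσe : σ = {k} := by
      refine Finset.Subset.antisymm ?_ (Finset.singleton_subset_iff.mpr hkσ)
      intro x hx
      rcases Finset.mem_insert.mp (hsub_σ hx) with rfl | hx2
      · exact absurd (Finset.disjoint_left.mp hd hx hiτ) (fun h => h)
      · exact hx2
    have hτe : τ = {i} := by
      refine Finset.Subset.antisymm ?_ (Finset.singleton_subset_iff.mpr hiτ)
      intro x hx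
      rcases Finset.mem_insert.mp (hsub_τ hx) with rfl | hx2
      · exact Finset.mem_singleton_self _
      · exact absurd ((Finset.mem_singleton.mp hx2) ▸ hx)
          (fun h => Finset.disjoint_left.mp hd hkσ h)
    refine hki ?_
    rw [PLt, ← pmST_pair_eq]
    have : f = pmST {k} {i} := by rw [heq, hσe, hτe]; rfl
    rw [← this]
    exact ⟨⟨σ, τ, hd, heq⟩, hJ, hminf⟩
  · -- f = (1 - X i) * (1 - X k)
    have hσe : σ = ∅ := by
      rw [Finset.eq_empty_iff_forall_notMem]
      intro x hx
      rcases Finset.mem_insert.mp (hsub_σ hx) with rfl | hx2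
      · exact Finset.disjoint_left.mp hd hx hiτ
      · exact Finset.disjoint_left.mp hd hx ((Finset.mem_singleton.mp hx2) ▸ hkτ)
    rw [heq, hσe] at hJ
    exact pmST_not_mem_neuralIdeal hgood.1 (Finset.empty_subset _)
      (Finset.disjoint_empty_right _) hJ

end PLtPart
section GraphPart

open SimpleGraph

universe u

variable {V : Type u}

lemma isChordal_induce {G : SimpleGraph V} (h : IsChordal G) (s : Set V) :
    IsChordal (G.induce s) := by
  intro u w hc hlen
  have hmap : (w.map (SimpleGraph.Embedding.induce s).toHom).IsCycle :=
    hc.map Subtype.val_injective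
  obtain ⟨a, b, hab, ha, hb, he⟩ := h _ _ hmap (by rwa [SimpleGraph.Walk.length_map])
  rw [SimpleGraph.Walk.support_map] at ha hb
  obtain ⟨a', ha', rfl⟩ := List.mem_map.mp ha
  obtain ⟨b', hb', rfl⟩ := List.mem_map.mp hb
  refine ⟨a', b', hab, ha', hb', ?_⟩
  intro hmem
  refine he ?_
  rw [SimpleGraph.Walk.edges_map]
  exact List.mem_map.mpr ⟨s(a', b'), hmem, Sym2.map_pair_eq _ _ _⟩

lemma reachable_induce_of_walk {G : SimpleGraph V} {s : Set V} :
    ∀ {u v : V} (w : G.Walk u v) (hw : ∀ x ∈ w.support, x ∈ s)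
      (hu : u ∈ s) (hv : v ∈ s), (G.induce s).Reachable ⟨u, hu⟩ ⟨v, hv⟩ := by
  intro u v w
  induction w with
  | nil => intro _ hu hv; rfl
  | cons h p ih =>
    intro hw hu hv
    have hb := hw _ (by
      rw [SimpleGraph.Walk.support_cons]
      exact List.mem_cons_of_mem _ p.start_mem_support)
    have hadj : (G.induce s).Adj ⟨_, hu⟩ ⟨_, hb⟩ := h
    exact (hadj.reachable).trans (ih (fun x hx => hw x (by
      rw [SimpleGraph.Walk.support_cons]; exact List.mem_cons_of_mem _ hx)) hb hv)

lemma edge_getVert_mem {G : SimpleGraph V} :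
    ∀ {u v : V} (w : G.Walk u v) (i : ℕ), i < w.length →
      s(w.getVert i, w.getVert (i + 1)) ∈ w.edges := by
  intro u v w
  induction w with
  | nil => intro i hi; simp at hi
  | cons h p ih =>
    intro i hi
    cases i with
    | zero =>
      rw [SimpleGraph.Walk.edges_cons, SimpleGraph.Walk.getVert_zero,
        SimpleGraph.Walk.getVert_cons_succ, SimpleGraph.Walk.getVert_zero]
      exact List.mem_cons_self
    | succ i =>
      rw [SimpleGraph.Walk.edges_cons, SimpleGraph.Walk.getVert_cons_succ,
        SimpleGraph.Walk.getVert_cons_succ]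
      exact List.mem_cons_of_mem _ (ih i (by rw [SimpleGraph.Walk.length_cons] at hi; omega))

lemma dist_triangle' {G : SimpleGraph V} {a b c : V}
    (h1 : G.Reachable a b) (h2 : G.Reachable b c) :
    G.dist a c ≤ G.dist a b + G.dist b c := by
  obtain ⟨w1, hw1⟩ := h1.exists_walk_length_eq_dist
  obtain ⟨w2, hw2⟩ := h2.exists_walk_length_eq_dist
  calc G.dist a c ≤ (w1.append w2).length := SimpleGraph.dist_le _
    _ = G.dist a b + G.dist b c := by rw [SimpleGraph.Walk.length_append, hw1, hw2]

lemma getVert_takeUntil_length [DecidableEq V] {G : SimpleGraph V} {u v x : V}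
    (w : G.Walk u v) (hx : x ∈ w.support) :
    w.getVert (w.takeUntil x hx).length = x := by
  have haux : ∀ {a b c : V} (p : G.Walk a b) (q : G.Walk b c),
      (p.append q).getVert p.length = b := by
    intro a b c p q
    rw [SimpleGraph.Walk.getVert_append, if_neg (lt_irrefl _), Nat.sub_self,
      SimpleGraph.Walk.getVert_zero]
  have h2 := haux (w.takeUntil x hx) (w.dropUntil x hx)
  rwa [w.take_spec hx] at h2

/-- In a shortest path, every pair of adjacent support vertices is joined by a
path edge (shortest paths have no chords). -/
lemma shortest_path_no_chord {G : SimpleGraph V} {u v x y : V}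
    (w : G.Walk u v) (hw : w.IsPath) (hl : w.length = G.dist u v)
    (hx : x ∈ w.support) (hy : y ∈ w.support) (ha : G.Adj x y) :
    s(x, y) ∈ w.edges := by
  classical
  have key : ∀ z (hz : z ∈ w.support), (w.takeUntil z hz).length = G.dist u z := by
    intro z hz
    have hsplit := w.take_spec hz
    have hlen : (w.takeUntil z hz).length + (w.dropUntil z hz).length = w.length := by
      conv_rhs => rw [← hsplit]
      rw [SimpleGraph.Walk.length_append]
    have h1 : G.dist u z ≤ (w.takeUntil z hz).length := SimpleGraph.dist_le _
    have h2 : G.dist z v ≤ (w.dropUntil z hz).length := SimpleGraph.dist_le _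
    have h3 : G.dist u v ≤ G.dist u z + G.dist z v :=
      dist_triangle' ⟨w.takeUntil z hz⟩ ⟨w.dropUntil z hz⟩
    omega
  have hgx := getVert_takeUntil_length w hx
  have hgy := getVert_takeUntil_length w hy
  set px := (w.takeUntil x hx).length with hpx
  set py := (w.takeUntil y hy).length with hpy
  have hdx : px = G.dist u x := key x hx
  have hdy : py = G.dist u y := key y hy
  have hne : px ≠ py := by
    intro heq
    apply ha.ne
    rw [← hgx, ← hgy, heq]
  have hd1 : G.dist u y ≤ G.dist u x + 1 := by
    have : G.dist x y ≤ 1 := by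
      have := SimpleGraph.dist_le (SimpleGraph.Walk.cons ha SimpleGraph.Walk.nil)
      simpa using this
    have := dist_triangle' (a := u) (b := x) (c := y) ⟨w.takeUntil x hx⟩ ⟨.cons ha .nil⟩
    omega
  have hd2 : G.dist u x ≤ G.dist u y + 1 := by
    have : G.dist y x ≤ 1 := by
      have := SimpleGraph.dist_le (SimpleGraph.Walk.cons ha.symm SimpleGraph.Walk.nil)
      simpa using this
    have := dist_triangle' (a := u) (b := y) (c := x) ⟨w.takeUntil y hy⟩ ⟨.cons ha.symm .nil⟩
    omega
  have hpxle : px ≤ w.length := SimpleGraph.Walk.length_takeUntil_le w hx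
  have hpyle : py ≤ w.length := SimpleGraph.Walk.length_takeUntil_le w hy
  rcases (by omega : py = px + 1 ∨ px = py + 1) with hcase | hcase
  · have hlt : px < w.length := by omega
    have := edge_getVert_mem w px hlt
    rwa [hgx, ← hcase, hgy] at this
  · have hlt : py < w.length := by omega
    have := edge_getVert_mem w py hlt
    rw [hgy, ← hcase, hgx] at this
    rwa [Sym2.eq_swap] at this

end GraphPart
section SeparatorPart

open SimpleGraph

universe u

variable {V : Type u}

/-- Connectivity avoiding a vertex set `S`. -/
def Avoid (G : SimpleGraph V) (S : Finset V) (u v : V) : Prop :=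
  ∃ w : G.Walk u v, ∀ x ∈ w.support, x ∉ S

namespace Avoid

variable {G : SimpleGraph V} {S : Finset V} {u v w : V}

lemma notMem_left (h : Avoid G S u v) : u ∉ S :=
  h.choose_spec u h.choose.start_mem_support

lemma notMem_right (h : Avoid G S u v) : v ∉ S :=
  h.choose_spec v h.choose.end_mem_support

lemma refl (hu : u ∉ S) : Avoid G S u u :=
  ⟨.nil, fun x hx => by rw [Walk.support_nil, List.mem_singleton] at hx; rwa [hx]⟩

lemma symm (h : Avoid G S u v) : Avoid G S v u := by
  obtain ⟨w, hw⟩ := h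
  exact ⟨w.reverse, fun x hx => hw x (by
    rwa [Walk.support_reverse, List.mem_reverse] at hx)⟩

lemma trans (h1 : Avoid G S u v) (h2 : Avoid G S v w) : Avoid G S u w := by
  obtain ⟨w1, hw1⟩ := h1
  obtain ⟨w2, hw2⟩ := h2
  refine ⟨w1.append w2, fun x hx => ?_⟩
  rcases (Walk.mem_support_append_iff _ _).mp hx with h | h
  · exact hw1 x h
  · exact hw2 x h

lemma adj (h : G.Adj u v) (hu : u ∉ S) (hv : v ∉ S) : Avoid G S u v := by
  refine ⟨.cons h .nil, fun x hx => ?_⟩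
  rw [Walk.support_cons, Walk.support_nil] at hx
  simp only [List.mem_cons, List.mem_singleton, List.not_mem_nil, or_false] at hx
  rcases hx with rfl | rfl
  · exact hu
  · exact hv

lemma of_prefix [DecidableEq V] {w : G.Walk u v} (hw : ∀ x ∈ w.support, x ∉ S)
    {x : V} (hx : x ∈ w.support) : Avoid G S u x :=
  ⟨w.takeUntil x hx, fun y hy => hw y (w.support_takeUntil_subset hx hy)⟩

end Avoid

variable [Fintype V] [DecidableEq V] {G : SimpleGraph V}

/-- Each vertex of a minimum separator has a neighbor in the component of `a`. -/
lemma sep_min_neighbor {a b : V} {S : Finset V}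
    (haS : a ∉ S) (hbS : b ∉ S) (hsep : ¬ Avoid G S a b)
    (hmin : ∀ T : Finset V, (a ∉ T ∧ b ∉ T ∧ ¬ Avoid G T a b) → S.card ≤ T.card)
    {s : V} (hs : s ∈ S) : ∃ z, Avoid G S a z ∧ G.Adj s z := by
  have herase : Avoid G (S.erase s) a b := by
    by_contra hcon
    have h1 := hmin (S.erase s) ⟨fun h => haS (Finset.mem_of_mem_erase h),
      fun h => hbS (Finset.mem_of_mem_erase h), hcon⟩
    have h2 := Finset.card_erase_of_mem hs
    have hpos : 0 < S.card := Finset.card_pos.mpr ⟨s, hs⟩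
    omega
  obtain ⟨w, hw⟩ := herase
  have hsw : s ∈ w.support := by
    by_contra hsupp
    refine hsep ⟨w, fun x hx hxS => ?_⟩
    rcases eq_or_ne x s with rfl | hne
    · exact hsupp hx
    · exact hw x hx (Finset.mem_erase.mpr ⟨hne, hxS⟩)
  have htsup : ∀ x ∈ (w.takeUntil s hsw).support, x ∉ S.erase s :=
    fun x hx => hw x (w.support_takeUntil_subset hsw hx)
  have hcount := w.count_support_takeUntil_eq_one hsw
  have hsa : s ≠ a := fun h => haS (h ▸ hs)
  obtain ⟨z, hadj, q, hq⟩ := Walk.exists_eq_cons_of_ne hsa (w.takeUntil s hsw).reverse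
  have hsq : s ∉ q.support := by
    have hcnt : (w.takeUntil s hsw).reverse.support.count s = 1 := by
      rw [Walk.support_reverse, List.count_reverse]
      exact hcount
    rw [hq, Walk.support_cons] at hcnt
    intro hmem
    have := List.count_pos_iff.mpr hmem  -- 0 < count
    rw [List.count_cons_self] at hcnt
    omega
  have hqS : ∀ x ∈ q.support, x ∉ S := by
    intro x hx
    have hx' : x ∈ (w.takeUntil s hsw).reverse.support := by
      rw [hq, Walk.support_cons]; exact List.mem_cons_of_mem _ hx
    rw [Walk.support_reverse, List.mem_reverse] at hx'
    intro hxS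
    rcases eq_or_ne x s with rfl | hne
    · exact hsq hx
    · exact htsup x hx' (Finset.mem_erase.mpr ⟨hne, hxS⟩)
  exact ⟨z, (Avoid.symm ⟨q, hqS⟩ : Avoid G S a z), hadj⟩
/-- Construction of a chordless shortest path through one side of a separator. -/
lemma exists_side_path {G : SimpleGraph V} {s t : V} {A : Set V}
    (hAtrans : ∀ x ∈ A, ∀ y ∈ A, ∃ w : G.Walk x y, ∀ z ∈ w.support, z ∈ A)
    (hst : s ≠ t) (hnadj : ¬ G.Adj s t)
    {za zt : V} (hza : za ∈ A) (hzt : zt ∈ A) (hsza : G.Adj s za) (htzt : G.Adj t zt) :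
    ∃ w : G.Walk s t, w.IsPath ∧ 2 ≤ w.length ∧ (∀ x ∈ w.support, x ∈ A ∪ {s, t}) ∧
      (∀ x y, x ∈ w.support → y ∈ w.support → G.Adj x y → s(x, y) ∈ w.edges) := by
  classical
  set W : Set V := A ∪ {s, t} with hW
  have hsW : s ∈ W := Or.inr (by simp)
  have htW : t ∈ W := Or.inr (by simp)
  have hzaW : za ∈ W := Or.inl hza
  have hztW : zt ∈ W := Or.inl hzt
  have hreach : (G.induce W).Reachable ⟨s, hsW⟩ ⟨t, htW⟩ := by
    obtain ⟨w0, hw0⟩ := hAtrans za hza zt hzt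
    have r1 : (G.induce W).Adj ⟨s, hsW⟩ ⟨za, hzaW⟩ := hsza
    have r2 := reachable_induce_of_walk (s := W) w0
      (fun x hx => Or.inl (hw0 x hx)) hzaW hztW
    have r3 : (G.induce W).Adj ⟨zt, hztW⟩ ⟨t, htW⟩ := htzt.symm
    exact (r1.reachable).trans (r2.trans r3.reachable)
  obtain ⟨w1, hw1len⟩ := hreach.exists_walk_length_eq_dist
  set P := w1.bypass with hP
  have hPpath := w1.bypass_isPath
  have hPlen : P.length = (G.induce W).dist ⟨s, hsW⟩ ⟨t, htW⟩ :=
    le_antisymm (hw1len ▸ w1.length_bypass_le) (SimpleGraph.dist_le _)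
  have h0 : P.length ≠ 0 := by
    intro h
    exact hst (congrArg Subtype.val (Walk.eq_of_length_eq_zero h))
  have h1 : P.length ≠ 1 := by
    intro h
    have h2 := P.adj_getVert_succ (i := 0) (by omega)
    rw [Walk.getVert_zero] at h2
    have h3 : P.getVert 1 = ⟨t, htW⟩ := P.getVert_of_length_le (by omega)
    rw [h3] at h2
    exact hnadj h2
  refine ⟨P.map (Embedding.induce W).toHom,
    Walk.map_isPath_of_injective Subtype.val_injective hPpath, ?_, ?_, ?_⟩
  · erw [Walk.length_map]; omega
  · intro x hx
    erw [Walk.support_map] at hx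
    obtain ⟨x', _, rfl⟩ := List.mem_map.mp hx
    exact x'.2
  · intro x y hx hy hadjxy
    erw [Walk.support_map] at hx hy
    obtain ⟨x', hx', rfl⟩ := List.mem_map.mp hx
    obtain ⟨y', hy', rfl⟩ := List.mem_map.mp hy
    have hadj' : (G.induce W).Adj x' y' := hadjxy
    have hchordless := shortest_path_no_chord P hPpath hPlen hx' hy' hadj'
    erw [Walk.edges_map]
    exact List.mem_map.mpr ⟨_, hchordless, Sym2.map_pair_eq _ _ _⟩

/-- A minimum-cardinality separator in a chordal graph is a clique. -/
lemma sep_min_clique (hch : IsChordal G) {a b : V} {S : Finset V}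
    (haS : a ∉ S) (hbS : b ∉ S) (hsep : ¬ Avoid G S a b)
    (hmin : ∀ T : Finset V, (a ∉ T ∧ b ∉ T ∧ ¬ Avoid G T a b) → S.card ≤ T.card)
    {s t : V} (hs : s ∈ S) (ht : t ∈ S) (hst : s ≠ t) : G.Adj s t := by
  by_contra hnadj
  set A : Set V := {v | Avoid G S a v} with hA
  set B : Set V := {v | Avoid G S b v} with hB
  have hABdisj : ∀ x, x ∈ A → x ∈ B → False := fun x h1 h2 => hsep (h1.trans h2.symm)
  have hAS : ∀ x ∈ A, x ∉ S := fun x hx => Avoid.notMem_right hx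
  have hBS : ∀ x ∈ B, x ∉ S := fun x hx => Avoid.notMem_right hx
  have hAnotadj : ∀ x, x ∈ A → ∀ y, y ∈ B → ¬ G.Adj x y := fun x hx y hy hadj =>
    hABdisj y (Avoid.trans hx (Avoid.adj hadj (hAS x hx) (hBS y hy))) hy
  obtain ⟨za, hzaA, hsza⟩ := sep_min_neighbor haS hbS hsep hmin hs
  obtain ⟨zta, hztaA, htzta⟩ := sep_min_neighbor haS hbS hsep hmin ht
  have hsep' : ¬ Avoid G S b a := fun h => hsep h.symm
  have hmin' : ∀ T : Finset V, (b ∉ T ∧ a ∉ T ∧ ¬ Avoid G T b a) → S.card ≤ T.card :=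
    fun T hT => hmin T ⟨hT.2.1, hT.1, fun h => hT.2.2 h.symm⟩
  obtain ⟨zb, hzbB, hszb⟩ := sep_min_neighbor hbS haS hsep' hmin' hs
  obtain ⟨ztb, hztbB, htztb⟩ := sep_min_neighbor hbS haS hsep' hmin' ht
  have hAtrans : ∀ x ∈ A, ∀ y ∈ A, ∃ w : G.Walk x y, ∀ z ∈ w.support, z ∈ A := by
    intro x hx y hy
    obtain ⟨w, hwS⟩ := (Avoid.trans (Avoid.symm hx) hy : Avoid G S x y)
    exact ⟨w, fun z hz => Avoid.trans hx (Avoid.of_prefix hwS hz)⟩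
  have hBtrans : ∀ x ∈ B, ∀ y ∈ B, ∃ w : G.Walk x y, ∀ z ∈ w.support, z ∈ B := by
    intro x hx y hy
    obtain ⟨w, hwS⟩ := (Avoid.trans (Avoid.symm hx) hy : Avoid G S x y)
    exact ⟨w, fun z hz => Avoid.trans hx (Avoid.of_prefix hwS hz)⟩
  obtain ⟨PA, hPApath, hPAlen, hPAsup, hPAnochord⟩ :=
    exists_side_path hAtrans hst hnadj hzaA hztaA hsza htzta
  obtain ⟨PB, hPBpath, hPBlen, hPBsup, hPBnochord⟩ :=
    exists_side_path hBtrans hst hnadj hzbB hztbB hszb htztb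
  -- intersection of the two supports is {s, t}
  have hint : ∀ x, x ∈ PA.support → x ∈ PB.support → x = s ∨ x = t := by
    intro x h1 h2
    rcases hPAsup x h1 with hxA | hxst
    · rcases hPBsup x h2 with hxB | hxst
      · exact (hABdisj x hxA hxB).elim
      · simpa using hxst
    · simpa using hxst
  -- the cycle
  set c : G.Walk s s := PA.append PB.reverse with hc
  have hclen : c.length = PA.length + PB.length := by
    rw [hc, Walk.length_append, Walk.length_reverse]
  have hedges_disj : ∀ e ∈ PA.edges, e ∉ PB.edges := by
    intro e
    induction e using Sym2.ind with
    | _ x y =>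
      intro he1 he2
      have hadjxy : G.Adj x y := PA.adj_of_mem_edges he1
      have hx1 := PA.fst_mem_support_of_mem_edges he1
      have hy1 := PA.snd_mem_support_of_mem_edges he1
      have hx2 := PB.fst_mem_support_of_mem_edges he2
      have hy2 := PB.snd_mem_support_of_mem_edges he2
      rcases hint x hx1 hx2 with rfl | rfl <;> rcases hint y hy1 hy2 with rfl | rfl
      · exact hadjxy.ne rfl
      · exact hnadj hadjxy
      · exact hnadj hadjxy.symm
      · exact hadjxy.ne rfl
  have htrail : c.edges.Nodup := by
    rw [hc, Walk.edges_append]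
    refine List.Nodup.append hPApath.isTrail.edges_nodup ?_ ?_
    · rw [Walk.edges_reverse]
      exact List.nodup_reverse.mpr hPBpath.isTrail.edges_nodup
    · intro e he1 he2
      rw [Walk.edges_reverse, List.mem_reverse] at he2
      exact hedges_disj e he1 he2
  have hnenil : c ≠ Walk.nil := by
    intro h
    have : c.length = 0 := by rw [h]; rfl
    omega
  have hsnottailA : s ∉ PA.support.tail := by
    have hA' := hPApath.support_nodup
    rw [Walk.support_eq_cons] at hA'
    exact (List.nodup_cons.mp hA').1
  have htnottailB : t ∉ PB.reverse.support.tail := by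
    have hB' := hPBpath.reverse.support_nodup
    rw [Walk.support_eq_cons] at hB'
    exact (List.nodup_cons.mp hB').1
  have htailnodup : c.support.tail.Nodup := by
    rw [hc, Walk.tail_support_append]
    refine List.Nodup.append ((List.tail_sublist _).nodup hPApath.support_nodup)
      ((List.tail_sublist _).nodup hPBpath.reverse.support_nodup) ?_
    intro x hx1 hx2
    have hxA : x ∈ PA.support := (List.tail_sublist _).subset hx1
    have hxB : x ∈ PB.support := by
      have := (List.tail_sublist _).subset hx2
      rwa [Walk.support_reverse, List.mem_reverse] at this
    rcases hint x hxA hxB with rfl | rfl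
    · exact hsnottailA hx1
    · exact htnottailB hx2
  have hcyc : c.IsCycle := ⟨⟨⟨htrail⟩, hnenil⟩, htailnodup⟩
  obtain ⟨x, y, hxy, hxsup, hysup, hedge⟩ := hch s c hcyc (by omega)
  have hx' : x ∈ PA.support ∨ x ∈ PB.support := by
    rcases (Walk.mem_support_append_iff _ _).mp hxsup with h | h
    · exact Or.inl h
    · right; rwa [Walk.support_reverse, List.mem_reverse] at h
  have hy' : y ∈ PA.support ∨ y ∈ PB.support := by
    rcases (Walk.mem_support_append_iff _ _).mp hysup with h | h
    · exact Or.inl h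
    · right; rwa [Walk.support_reverse, List.mem_reverse] at h
  by_cases hcase1 : x ∈ PA.support ∧ y ∈ PA.support
  · refine hedge ?_
    rw [hc, Walk.edges_append]
    exact List.mem_append_left _ (hPAnochord x y hcase1.1 hcase1.2 hxy)
  by_cases hcase2 : x ∈ PB.support ∧ y ∈ PB.support
  · refine hedge ?_
    rw [hc, Walk.edges_append]
    refine List.mem_append_right _ ?_
    rw [Walk.edges_reverse, List.mem_reverse]
    exact hPBnochord x y hcase2.1 hcase2.2 hxy
  rcases hx' with hxA | hxB <;> rcases hy' with hyA | hyB
  · exact hcase1 ⟨hxA, hyA⟩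
  · have hxnB : x ∉ PB.support := fun h => hcase2 ⟨h, hyB⟩
    have hynA : y ∉ PA.support := fun h => hcase1 ⟨hxA, h⟩
    have hxA' : x ∈ A := by
      rcases hPAsup x hxA with h | h
      · exact h
      · exfalso
        rcases (by simpa using h : x = s ∨ x = t) with rfl | rfl
        · exact hxnB PB.start_mem_support
        · exact hxnB PB.end_mem_support
    have hyB' : y ∈ B := by
      rcases hPBsup y hyB with h | h
      · exact h
      · exfalso
        rcases (by simpa using h : y = s ∨ y = t) with rfl | rfl
        · exact hynA PA.start_mem_support
        · exact hynA PA.end_mem_support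
    exact hAnotadj x hxA' y hyB' hxy
  · have hynB : y ∉ PB.support := fun h => hcase2 ⟨hxB, h⟩
    have hxnA : x ∉ PA.support := fun h => hcase1 ⟨h, hyA⟩
    have hyA' : y ∈ A := by
      rcases hPAsup y hyA with h | h
      · exact h
      · exfalso
        rcases (by simpa using h : y = s ∨ y = t) with rfl | rfl
        · exact hynB PB.start_mem_support
        · exact hynB PB.end_mem_support
    have hxB' : x ∈ B := by
      rcases hPBsup x hxB with h | h
      · exact h
      · exfalso
        rcases (by simpa using h : x = s ∨ x = t) with rfl | rfl
        · exact hxnA PA.start_mem_support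
        · exact hxnA PA.end_mem_support
    exact hAnotadj y hyA' x hxB' hxy.symm
  · exact hcase2 ⟨hxB, hyB⟩
end SeparatorPart

section MainGraph

open SimpleGraph

universe u

set_option maxHeartbeats 1000000 in
/-- Every finite chordal graph with a proper clique `K` has a simplicial vertex
outside `K` (a Dirac-style theorem). -/
theorem chordal_exists_simplicial_outside :
    ∀ (N : ℕ) {V : Type u} [Fintype V] [DecidableEq V] (G : SimpleGraph V),
      Fintype.card V ≤ N → IsChordal G → ∀ K : Set V, G.IsClique K → K ≠ Set.univ →
      ∃ v, v ∉ K ∧ IsSimplicial G v := by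
  intro N
  induction N with
  | zero =>
    intro V _ _ G hcard hch K hK hKne
    have hVempty : IsEmpty V := by
      rw [← Fintype.card_eq_zero_iff]; omega
    exact absurd (Set.eq_univ_of_forall fun v => (hVempty.false v).elim) hKne
  | succ N ih =>
    intro V _ _ G hcard hch K hK hKne
    classical
    by_cases hcomp : ∀ u v : V, u ≠ v → G.Adj u v
    · obtain ⟨v, hv⟩ := (Set.ne_univ_iff_exists_notMem K).mp hKne
      exact ⟨v, hv, fun x _ y _ hne => hcomp x y hne⟩
    · push_neg at hcomp
      obtain ⟨a, b, hab_ne, hab⟩ := hcomp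
      have hsep0 : ∃ T : Finset V, a ∉ T ∧ b ∉ T ∧ ¬ Avoid G T a b := by
        refine ⟨Finset.univ \ {a, b}, by simp, by simp, ?_⟩
        rintro ⟨w, hw⟩
        cases w with
        | nil => exact hab_ne rfl
        | cons h p =>
          have hz := hw _ (by
            rw [Walk.support_cons]
            exact List.mem_cons_of_mem _ p.start_mem_support)
          simp only [Finset.mem_sdiff, Finset.mem_univ, true_and, not_not,
            Finset.mem_insert, Finset.mem_singleton] at hz
          rcases hz with rfl | rfl
          · exact h.ne rfl
          · exact hab h
      obtain ⟨S, hSmem, hSmin0⟩ := Finset.exists_min_image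
        ((Finset.univ : Finset (Finset V)).filter fun T => a ∉ T ∧ b ∉ T ∧ ¬ Avoid G T a b)
        Finset.card (by obtain ⟨T, hT⟩ := hsep0; exact ⟨T, Finset.mem_filter.mpr ⟨Finset.mem_univ _, hT⟩⟩)
      obtain ⟨haS, hbS, hSsep⟩ : a ∉ S ∧ b ∉ S ∧ ¬ Avoid G S a b :=
        (Finset.mem_filter.mp hSmem).2
      have hSmin : ∀ T : Finset V, (a ∉ T ∧ b ∉ T ∧ ¬ Avoid G T a b) → S.card ≤ T.card :=
        fun T hT => hSmin0 T (Finset.mem_filter.mpr ⟨Finset.mem_univ _, hT⟩)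
      have hSclique : ∀ x ∈ S, ∀ y ∈ S, x ≠ y → G.Adj x y :=
        fun x hx y hy hxy => sep_min_clique hch haS hbS hSsep hSmin hx hy hxy
      have main : ∀ p q : V, p ∉ S → q ∉ S → ¬ Avoid G S p q →
          (∀ x, x ∈ K → ¬ Avoid G S p x) → ∃ v, v ∉ K ∧ IsSimplicial G v := by
        intro p q hpS hqS hpq hKp
        set A : Set V := {v | Avoid G S p v} with hAdef
        set W : Set V := A ∪ ↑S with hWdef
        have hpA : p ∈ A := Avoid.refl hpS
        have hAnS : ∀ x ∈ A, x ∉ S := fun x hx => Avoid.notMem_right hx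
        have hqW : q ∉ W := by
          rintro (h | h)
          · exact hpq h
          · exact hqS h
        have hcardW : Fintype.card ↥W < Fintype.card V := by
          refine Fintype.card_lt_of_injective_of_notMem Subtype.val
            Subtype.val_injective (b := q) ?_
          rintro ⟨⟨x, hxW⟩, rfl⟩
          exact hqW hxW
        set K' : Set ↥W := {x | (x : V) ∈ S} with hK'def
        have hK'cl : (G.induce W).IsClique K' := by
          intro x hx y hy hne
          have hvne : (x : V) ≠ (y : V) := fun h => hne (Subtype.ext h)
          exact hSclique x hx y hy hvne
        have hK'ne : K' ≠ Set.univ := by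
          intro h
          have hpW : p ∈ W := Or.inl hpA
          have hmem : (⟨p, hpW⟩ : ↥W) ∈ K' := h ▸ Set.mem_univ _
          exact hpS hmem
        obtain ⟨u, huK', husimp⟩ := ih (G.induce W) (by omega)
          (isChordal_induce hch W) K' hK'cl hK'ne
        have huA : (u : V) ∈ A := by
          rcases u.2 with h | h
          · exact h
          · exact absurd h huK'
        have hnbr : ∀ x : V, G.Adj u x → x ∈ W := by
          intro x hadj
          by_cases hxS : x ∈ S
          · exact Or.inr hxS
          · exact Or.inl (Avoid.trans huA (Avoid.adj hadj (hAnS _ huA) hxS))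
        refine ⟨u, fun hK0 => hKp u hK0 huA, ?_⟩
        intro x hx y hy hne
        have hxW : x ∈ W := hnbr x hx
        have hyW : y ∈ W := hnbr y hy
        have hx' : (⟨x, hxW⟩ : ↥W) ∈ (G.induce W).neighborSet u := hx
        have hy' : (⟨y, hyW⟩ : ↥W) ∈ (G.induce W).neighborSet u := hy
        have hadj' : (G.induce W).Adj ⟨x, hxW⟩ ⟨y, hyW⟩ :=
          husimp hx' hy' (fun h => hne (congrArg Subtype.val h))
        exact hadj'
      by_cases hKA : ∀ x, x ∈ K → ¬ Avoid G S a x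
      · exact main a b haS hbS hSsep hKA
      · push_neg at hKA
        obtain ⟨x₀, hx₀K, hx₀A⟩ := hKA
        refine main b a hbS haS (fun h => hSsep h.symm) ?_
        intro x hxK hBx
        have hne : x₀ ≠ x := by
          rintro rfl
          exact hSsep (hx₀A.trans hBx.symm)
        have hadj := hK hx₀K hxK hne
        exact hSsep ((hx₀A.trans
          (Avoid.adj hadj hx₀A.notMem_right hBx.notMem_right)).trans hBx.symm)

end MainGraph
section FinalAssembly

open SimpleGraph

/-- a simplicial vertex of `G(C)` that is minimal in `P(C)` among
simplicial vertices is minimal in `P(C)`. -/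
theorem minimal_simplicial_is_minimal {n : ℕ} (C : Set (Finset (Fin n)))
    (hgood : GoodCode C) (hdeg : DegreeTwo C) (hch : IsChordal (GRel C))
    (i : Fin n) (hsi : IsSimplicial (GRel C) i)
    (hmin : ∀ j, IsSimplicial (GRel C) j → ¬ PLt C j i) :
    ∀ j, ¬ PLt C j i := by
  intro j hj
  classical
  set I : Set (Fin n) := {k | PLt C k i} with hI
  set Nb : Set (Fin n) := (GRel C).neighborSet i with hNb
  set W : Set (Fin n) := I ∪ Nb with hWdef
  have hjI : j ∈ I := hj
  have hch' : IsChordal ((GRel C).induce W) := isChordal_induce hch W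
  set K : Set ↥W := {x | (x : Fin n) ∈ Nb} with hK
  have hKcl : ((GRel C).induce W).IsClique K := by
    intro x hx y hy hne
    have hvne : (x : Fin n) ≠ (y : Fin n) := fun h => hne (Subtype.ext h)
    exact hsi hx hy hvne
  have hKne : K ≠ Set.univ := by
    intro h
    have hjW : j ∈ W := Or.inl hjI
    have hmem : (⟨j, hjW⟩ : ↥W) ∈ K := h ▸ Set.mem_univ _
    have hadj : (GRel C).Adj i j := hmem
    exact PLt_not_adj hj hadj.symm
  obtain ⟨u, huK, husimp⟩ := chordal_exists_simplicial_outside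
    (Fintype.card ↥W) ((GRel C).induce W) le_rfl hch' K hKcl hKne
  have huI : (u : Fin n) ∈ I := by
    rcases u.2 with h | h
    · exact h
    · exact absurd h huK
  have hnbr : ∀ x, (GRel C).Adj ↑u x → x ∈ W := by
    intro x hadj
    rcases fact3 hgood huI hadj with h | h
    · exact Or.inr h
    · exact Or.inl h
  have husimpG : IsSimplicial (GRel C) ↑u := by
    intro x hx y hy hne
    have hxW : x ∈ W := hnbr x hx
    have hyW : y ∈ W := hnbr y hy
    have hx' : (⟨x, hxW⟩ : ↥W) ∈ ((GRel C).induce W).neighborSet u := hx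
    have hy' : (⟨y, hyW⟩ : ↥W) ∈ ((GRel C).induce W).neighborSet u := hy
    have hadj' : ((GRel C).induce W).Adj ⟨x, hxW⟩ ⟨y, hyW⟩ :=
      husimp hx' hy' (fun h => hne (congrArg Subtype.val h))
    exact hadj'
  exact hmin ↑u husimpG huI

end FinalAssembly
end
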